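/- arXiv:1803.02634 — 4 statements merged into one kernel-verified Lean document; each statement's English description precedes it below -/
import Mathlib

section
/- For the reduced chemostat system with equal removal rates, any steady state (u*, v*) with u* ≥ 0, v* ≥ 0 satisfying μ_u(S_in - u - v)u - Du - α(u,v)u + β(v)v = 0 and μ_v(S_in - u - v)v - Dv + α(u,v)u - β(v)v = 0 must have either both u* = 0 and v* = 0, or both u* > 0 and v* > 0; i.e., there is no steady state where exactly one of the two biomass forms is present. -/
open Set

/-- No steady state of the reduced chemostat has exactly one of the two
biomass forms present: either both vanish (washout) or both are positive. -/
theorem chemostat_no_single_form_steady_state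
    (D Sin : ℝ) (hD : 0 < D) (hSin : 0 < Sin)
    (μu μv : ℝ → ℝ) (hμu_cont : Continuous μu) (hμv_cont : Continuous μv)
    (hμu0 : μu 0 = 0) (hμv0 : μv 0 = 0)
    (α : ℝ → ℝ → ℝ) (β : ℝ → ℝ)
    (hα : ∀ u > (0 : ℝ), 0 < α u 0) (hβ : ∀ v > (0 : ℝ), 0 < β v)
    (u v : ℝ) (hu : 0 ≤ u) (hv : 0 ≤ v)
    (heq1 : μu (Sin - u - v) * u - D * u - α u v * u + β v * v = 0)
    (heq2 : μv (Sin - u - v) * v - D * v + α u v * u - β v * v = 0) :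
    (u = 0 ∧ v = 0) ∨ (0 < u ∧ 0 < v) := by
  rcases hu.eq_or_lt with hu0 | hu0
  · rcases hv.eq_or_lt with hv0 | hv0
    · exact Or.inl ⟨hu0.symm, hv0.symm⟩
    · exfalso
      have h := heq1
      rw [← hu0] at h
      simp at h
      rcases h with h | h
      · exact absurd h (ne_of_gt (hβ v hv0))
      · exact absurd h (ne_of_gt hv0)
  · rcases hv.eq_or_lt with hv0 | hv0
    · exfalso
      have h := heq2
      rw [← hv0] at h
      simp at h
      rcases h with h | h
      · exact absurd h (ne_of_gt (hα u hu0))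
      · exact absurd h (ne_of_gt hu0)
    · exact Or.inr ⟨hu0, hv0⟩
end

section
/- Let φ_u(s) = μ_u(s) - D and φ_v(s) = μ_v(s) - D, and define on I = (λ_u, λ_v) the function H(s) = D·φ_u(s)(φ_v(s) - b)/(a·φ_v(s)), where a, b > 0. Then H is strictly increasing on I, H(s) → 0 as s → λ_u⁺, and H(s) → +∞ as s → λ_v⁻. -/
/-!
Write `p = μu - D` and `q = μv - D`. Since `q ≠ 0` on the interval,
`H = (D / a) · p · (1 - b / q)`. Both factors are positive and strictly increasing there: `p`
because `μu` increases from `p(λu) = 0`, and `1 - b / q` because `q` increases through negative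
values towards `q(λv) = 0`. At `λu` the function `H` is continuous with value `0`; at `λv` the
factor `p` tends to `p(λv) > 0` while `1 - b / q → +∞`.
-/

open Set Filter Topology

theorem strictMonoOn_of_hasDerivAt_pos {S : Set ℝ} (hS : Convex ℝ S) {f f' : ℝ → ℝ}
    (hf : ∀ x ∈ S, HasDerivAt f (f' x) x) (hf' : ∀ x ∈ S, 0 < f' x) : StrictMonoOn f S :=
  strictMonoOn_of_hasDerivWithinAt_pos hS
    (fun x hx => (hf x hx).continuousAt.continuousWithinAt)
    (fun x hx => (hf x (interior_subset hx)).hasDerivWithinAt)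
    (fun x hx => hf' x (interior_subset hx))

section QuotientForm

variable {α : Type*} {p q : α → ℝ} {a b c : ℝ}

theorem mul_sub_div_eq_div_mul_one_sub_div {x y : ℝ} (hy : y ≠ 0) :
    c * (x * (y - b)) / (a * y) = c / a * (x * (1 - b / y)) := by
  by_cases ha : a = 0
  · simp [ha]
  · field_simp

theorem strictMonoOn_mul_sub_div [Preorder α] {S : Set α} (hc : 0 < c) (ha : 0 < a)
    (hb : 0 < b) (hp : StrictMonoOn p S) (hq : StrictMonoOn q S) (hp₀ : ∀ x ∈ S, 0 < p x)
    (hq₀ : ∀ x ∈ S, q x < 0) :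
    StrictMonoOn (fun x => c * (p x * (q x - b)) / (a * q x)) S := by
  intro x hx y hy hxy
  simp only [mul_sub_div_eq_div_mul_one_sub_div (hq₀ x hx).ne,
    mul_sub_div_eq_div_mul_one_sub_div (hq₀ y hy).ne]
  have hinv : b / q y < b / q x := by
    simpa only [mul_one_div] using
      mul_lt_mul_of_pos_left (one_div_lt_one_div_of_neg_of_lt (hq₀ y hy) (hq hx hy hxy)) hb
  have hx₁ : 0 < 1 - b / q x := by linarith [div_neg_of_pos_of_neg hb (hq₀ x hx)]
  gcongr ?_ * ?_
  exact mul_lt_mul'' (hp hx hy hxy) (by linarith) (hp₀ x hx).le hx₁.le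

theorem tendsto_mul_sub_div_of_tendsto_zero {l : Filter α} {Q : ℝ} (ha : a ≠ 0)
    (hp : Tendsto p l (𝓝 0)) (hq : Tendsto q l (𝓝 Q)) (hQ : Q ≠ 0) :
    Tendsto (fun x => c * (p x * (q x - b)) / (a * q x)) l (𝓝 0) := by
  have h := ((hp.mul (hq.sub_const b)).const_mul c).div (hq.const_mul a) (mul_ne_zero ha hQ)
  rwa [zero_mul, mul_zero, zero_div] at h

theorem tendsto_mul_sub_div_atTop {l : Filter α} {P : ℝ} (hc : 0 < c) (ha : 0 < a)
    (hb : 0 < b) (hp : Tendsto p l (𝓝 P)) (hP : 0 < P) (hq : Tendsto q l (𝓝[<] 0)) :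
    Tendsto (fun x => c * (p x * (q x - b)) / (a * q x)) l atTop := by
  have hfactor : Tendsto (fun x => 1 - b / q x) l atTop := by
    have hdiv : Tendsto (fun x => b / q x) l atBot :=
      (tendsto_inv_nhdsLT_zero.comp hq).const_mul_atBot hb
    simpa [sub_eq_add_neg] using
      tendsto_atTop_add_const_left l 1 (tendsto_neg_atBot_atTop.comp hdiv)
  have hq₀ : ∀ᶠ x in l, q x < 0 := hq.eventually self_mem_nhdsWithin
  refine (((hp.const_mul (c / a)).pos_mul_atTop (by positivity) hfactor)).congr' ?_
  filter_upwards [hq₀] with x hx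
  rw [mul_sub_div_eq_div_mul_one_sub_div hx.ne, mul_assoc]

end QuotientForm

theorem chemostat_H_strict_mono_and_limits_general
    (D a b lu lv : ℝ) (hD : 0 < D) (ha : 0 < a) (hb : 0 < b) (hlt : lu < lv)
    (μu μv μu' μv' : ℝ → ℝ)
    (hμu_deriv : ∀ s ∈ Icc lu lv, HasDerivAt μu (μu' s) s)
    (hμv_deriv : ∀ s ∈ Icc lu lv, HasDerivAt μv (μv' s) s)
    (hμu'_pos : ∀ s ∈ Icc lu lv, 0 < μu' s)
    (hμv'_pos : ∀ s ∈ Icc lu lv, 0 < μv' s)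
    (hbu : μu lu = D) (hbv : μv lv = D) :
    StrictMonoOn (fun s => D * ((μu s - D) * ((μv s - D) - b)) / (a * (μv s - D)))
        (Ioo lu lv) ∧
    Tendsto (fun s => D * ((μu s - D) * ((μv s - D) - b)) / (a * (μv s - D)))
        (𝓝[>] lu) (𝓝 0) ∧
    Tendsto (fun s => D * ((μu s - D) * ((μv s - D) - b)) / (a * (μv s - D)))
        (𝓝[<] lv) atTop := by
  have hu := strictMonoOn_of_hasDerivAt_pos (convex_Icc lu lv) hμu_deriv hμu'_pos
  have hv := strictMonoOn_of_hasDerivAt_pos (convex_Icc lu lv) hμv_deriv hμv'_pos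
  have hlu : lu ∈ Icc lu lv := left_mem_Icc.2 hlt.le
  have hlv : lv ∈ Icc lu lv := right_mem_Icc.2 hlt.le
  have hφu : StrictMonoOn (fun s => μu s - D) (Icc lu lv) := fun x hx y hy hxy =>
    sub_lt_sub_right (hu hx hy hxy) D
  have hφv : StrictMonoOn (fun s => μv s - D) (Icc lu lv) := fun x hx y hy hxy =>
    sub_lt_sub_right (hv hx hy hxy) D
  have hφu_pos : ∀ s ∈ Ioo lu lv, 0 < μu s - D := fun s hs =>
    sub_eq_zero.2 hbu ▸ hφu hlu (Ioo_subset_Icc_self hs) hs.1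
  have hφv_neg : ∀ s ∈ Ioo lu lv, μv s - D < 0 := fun s hs =>
    sub_eq_zero.2 hbv ▸ hφv (Ioo_subset_Icc_self hs) hlv hs.2
  refine ⟨?_, ?_, ?_⟩
  · exact strictMonoOn_mul_sub_div hD ha hb (hφu.mono Ioo_subset_Icc_self)
      (hφv.mono Ioo_subset_Icc_self) hφu_pos hφv_neg
  · have hφu_lu : Tendsto (fun s => μu s - D) (𝓝[>] lu) (𝓝 0) := by
      simpa [hbu] using (hμu_deriv lu hlu).continuousAt.continuousWithinAt.tendsto.sub_const D
    exact tendsto_mul_sub_div_of_tendsto_zero ha.ne' hφu_lu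
      ((hμv_deriv lu hlu).continuousAt.continuousWithinAt.tendsto.sub_const D)
      (sub_neg.2 (hbv ▸ hv hlu hlv hlt)).ne
  · have hφv_lv : Tendsto (fun s => μv s - D) (𝓝[<] lv) (𝓝[<] 0) := by
      refine tendsto_nhdsWithin_of_tendsto_nhds_of_eventually_within _ ?_ ?_
      · simpa [hbv] using (hμv_deriv lv hlv).continuousAt.continuousWithinAt.tendsto.sub_const D
      · filter_upwards [Ioo_mem_nhdsLT hlt] using hφv_neg
    exact tendsto_mul_sub_div_atTop hD ha hb
      ((hμu_deriv lv hlv).continuousAt.continuousWithinAt.tendsto.sub_const D)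
      (sub_pos.2 (hbu ▸ hu hlu hlv hlt)) hφv_lv

/-- The function `H(s) = D·φu(s)(φv(s) - b)/(a·φv(s))` is strictly increasing on
`I = (lu, lv)`, tends to `0` at `lu⁺` and to `+∞` at `lv⁻`. -/
theorem chemostat_H_strict_mono_and_limits
    (D a b lu lv : ℝ) (hD : 0 < D) (ha : 0 < a) (hb : 0 < b) (hlt : lu < lv)
    (μu μv μu' μv' : ℝ → ℝ)
    (hμu_cont : Continuous μu) (hμv_cont : Continuous μv)
    (hμu_deriv : ∀ s ∈ Icc lu lv, HasDerivAt μu (μu' s) s)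
    (hμv_deriv : ∀ s ∈ Icc lu lv, HasDerivAt μv (μv' s) s)
    (hμu'_pos : ∀ s ∈ Icc lu lv, 0 < μu' s)
    (hμv'_pos : ∀ s ∈ Icc lu lv, 0 < μv' s)
    (hbu : μu lu = D) (hbv : μv lv = D)
    (hsign : ∀ s ∈ Ioo lu lv, μv s < D ∧ D < μu s) :
    StrictMonoOn (fun s => D * ((μu s - D) * ((μv s - D) - b)) / (a * (μv s - D)))
        (Ioo lu lv) ∧
    Tendsto (fun s => D * ((μu s - D) * ((μv s - D) - b)) / (a * (μv s - D)))
        (𝓝[>] lu) (𝓝 0) ∧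
    Tendsto (fun s => D * ((μu s - D) * ((μv s - D) - b)) / (a * (μv s - D)))
        (𝓝[<] lv) atTop :=
  chemostat_H_strict_mono_and_limits_general D a b lu lv hD ha hb hlt μu μv μu' μv' hμu_deriv
    hμv_deriv hμu'_pos hμv'_pos hbu hbv
end

section
/- With attachment function α(u,v) = a(u+v) and detachment β(v) = b (a, b > 0), the reduced chemostat system with equal removal rate D admits a coexistence steady state (s*, u*, v*) with u* > 0 and v* > 0 if and only if D < μ_u(S_in); moreover in that case the coexistence steady state is unique. -/
open Set

/-- Auxiliary: structural facts at any coexistence steady state. -/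
lemma chemostat_aux {D Sin a b : ℝ} {μu μv : ℝ → ℝ}
    (hcmp : ∀ s > (0 : ℝ), μv s < μu s)
    {u v : ℝ} (hu : 0 < u) (hv : 0 < v) (hs : 0 < Sin - u - v)
    (e1 : (μu (Sin - u - v) - D) * u - a * (u + v) * u + b * v = 0)
    (e2 : (μv (Sin - u - v) - D) * v + a * (u + v) * u - b * v = 0) :
    0 < μu (Sin - u - v) - D ∧ 0 < D - μv (Sin - u - v) ∧
    (μu (Sin - u - v) - D) * u = (D - μv (Sin - u - v)) * v ∧
    a * (u + v) * (D - μv (Sin - u - v))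
      = (b + (D - μv (Sin - u - v))) * (μu (Sin - u - v) - D) := by
  have hlt := hcmp (Sin - u - v) hs
  have quv : (μu (Sin - u - v) - D) * u = (D - μv (Sin - u - v)) * v := by linarith
  have hq : 0 < μu (Sin - u - v) - D := by
    by_contra h
    push_neg at h
    have h1 : (μu (Sin - u - v) - D) * u ≤ 0 :=
      mul_nonpos_of_nonpos_of_nonneg h hu.le
    have h2 : 0 < (D - μv (Sin - u - v)) * v := mul_pos (by linarith) hv
    linarith
  have hp : 0 < D - μv (Sin - u - v) := by
    by_contra h
    push_neg at h
    have h1 : 0 < (μu (Sin - u - v) - D) * u := mul_pos hq hu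
    have h2 : (D - μv (Sin - u - v)) * v ≤ 0 :=
      mul_nonpos_of_nonpos_of_nonneg h hv.le
    linarith
  refine ⟨hq, hp, quv, ?_⟩
  have h2 : a * (u + v) * u = (b + (D - μv (Sin - u - v))) * v := by
    linear_combination e2
  have hvne : v ≠ 0 := ne_of_gt hv
  have h3 : (a * (u + v) * (D - μv (Sin - u - v))) * v
      = ((b + (D - μv (Sin - u - v))) * (μu (Sin - u - v) - D)) * v := by
    linear_combination (μu (Sin - u - v) - D) * h2 - a * (u + v) * quv
  exact mul_right_cancel₀ hvne h3


/-- Auxiliary pure arithmetic fact used for uniqueness of `s*`. -/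
lemma chemostat_arith {a b w1 w2 p1 p2 q1 q2 : ℝ}
    (ha : 0 < a) (hb : 0 < b) (hw : w2 < w1) (hw2 : 0 < w2)
    (hp2 : 0 < p2) (hp : p2 < p1) (hq1 : 0 < q1) (hq : q1 < q2)
    (k1 : a * w1 * p1 = (b + p1) * q1) (k2 : a * w2 * p2 = (b + p2) * q2) :
    False := by
  have hp1 : 0 < p1 := hp2.trans hp
  have hq2 : 0 < q2 := hq1.trans hq
  have E1 : a * w1 * p1 * p2 = b * (q1 * p2) + p1 * p2 * q1 := by
    linear_combination p2 * k1
  have E2 : a * w2 * p1 * p2 = b * (q2 * p1) + p1 * p2 * q2 := by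
    linear_combination p1 * k2
  have A : a * w2 * p1 * p2 < a * w1 * p1 * p2 := by
    nlinarith [mul_pos (mul_pos ha hp1) hp2]
  have B : q1 * p2 < q2 * p1 := by
    nlinarith [mul_pos hq2 (sub_pos.2 hp), mul_pos (sub_pos.2 hq) hp2]
  have B' : b * (q1 * p2) < b * (q2 * p1) := mul_lt_mul_of_pos_left B hb
  have C : p1 * p2 * q1 < p1 * p2 * q2 := by
    nlinarith [mul_pos hp1 hp2]
  linarith

/-- With `α(u,v) = a(u+v)` and `β(v) = b`, the chemostat with equal removal
rate `D` admits a coexistence steady state iff `D < μu(Sin)`; moreover the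
coexistence steady state is then unique. -/
theorem chemostat_coexistence_exists_iff_and_unique
    (D Sin a b lu lv : ℝ)
    (hD : 0 < D) (hSin : 0 < Sin) (ha : 0 < a) (hb : 0 < b)
    (hlu : 0 < lu) (hlt : lu < lv)
    (μu μv : ℝ → ℝ)
    (hμu_smooth : ContDiff ℝ 1 μu) (hμv_smooth : ContDiff ℝ 1 μv)
    (hμu_mono : StrictMonoOn μu (Ici 0)) (hμv_mono : StrictMonoOn μv (Ici 0))
    (hμu0 : μu 0 = 0) (hμv0 : μv 0 = 0)
    (hμu_nonneg : ∀ s ≥ (0 : ℝ), 0 ≤ μu s) (hμv_nonneg : ∀ s ≥ (0 : ℝ), 0 ≤ μv s)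
    (hcmp : ∀ s > (0 : ℝ), μv s < μu s)
    (hbu : μu lu = D) (hbv : μv lv = D) :
    ((∃ u v : ℝ, 0 < u ∧ 0 < v ∧ 0 < Sin - u - v ∧
        (μu (Sin - u - v) - D) * u - a * (u + v) * u + b * v = 0 ∧
        (μv (Sin - u - v) - D) * v + a * (u + v) * u - b * v = 0)
      ↔ D < μu Sin) ∧
    (∀ u₁ v₁ u₂ v₂ : ℝ,
      (0 < u₁ ∧ 0 < v₁ ∧ 0 < Sin - u₁ - v₁ ∧
        (μu (Sin - u₁ - v₁) - D) * u₁ - a * (u₁ + v₁) * u₁ + b * v₁ = 0 ∧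
        (μv (Sin - u₁ - v₁) - D) * v₁ + a * (u₁ + v₁) * u₁ - b * v₁ = 0) →
      (0 < u₂ ∧ 0 < v₂ ∧ 0 < Sin - u₂ - v₂ ∧
        (μu (Sin - u₂ - v₂) - D) * u₂ - a * (u₂ + v₂) * u₂ + b * v₂ = 0 ∧
        (μv (Sin - u₂ - v₂) - D) * v₂ + a * (u₂ + v₂) * u₂ - b * v₂ = 0) →
      u₁ = u₂ ∧ v₁ = v₂) := by
  -- the key "uniqueness of s" argument
  have hcontra : ∀ s t : ℝ, 0 < s → 0 < t → 0 < Sin - s → 0 < Sin - t →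
      0 < μu s - D → 0 < D - μv s → 0 < μu t - D → 0 < D - μv t →
      a * (Sin - s) * (D - μv s) = (b + (D - μv s)) * (μu s - D) →
      a * (Sin - t) * (D - μv t) = (b + (D - μv t)) * (μu t - D) →
      s < t → False := by
    intro s t hspos htpos hws hwt hqs hps hqt hpt ks kt hst
    have hmu : μu s < μu t := hμu_mono hspos.le htpos.le hst
    have hmv : μv s < μv t := hμv_mono hspos.le htpos.le hst
    exact chemostat_arith ha hb (by linarith : Sin - t < Sin - s) hwt
      hpt (by linarith) hqs (by linarith) ks kt
  have hIciS : Sin ∈ Ici (0:ℝ) := hSin.le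
  have hIcilu : lu ∈ Ici (0:ℝ) := hlu.le
  constructor
  · constructor
    · -- existence implies D < μu Sin
      rintro ⟨u, v, hu, hv, hs, e1, e2⟩
      obtain ⟨hq, _, _, _⟩ := chemostat_aux hcmp hu hv hs e1 e2
      have hlt2 : Sin - u - v < Sin := by linarith
      have := hμu_mono (le_of_lt hs) hIciS hlt2
      linarith
    · -- D < μu Sin implies existence
      intro hDS
      have hluSin : lu < Sin := by
        by_contra h
        push_neg at h
        rcases eq_or_lt_of_le h with h' | h'
        · rw [← h'] at hbu; linarith
        · have := hμu_mono hIciS hIcilu h'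
          linarith
      set m : ℝ := min lv Sin with hm
      have hlum : lu < m := lt_min hlt hluSin
      set F : ℝ → ℝ :=
        fun s => a * (Sin - s) * (D - μv s) - (b + (D - μv s)) * (μu s - D) with hF
      have hFcont : ContinuousOn F (Icc lu m) := by
        apply Continuous.continuousOn
        have hcu := hμu_smooth.continuous
        have hcv := hμv_smooth.continuous
        fun_prop
      have hFlu : 0 < F lu := by
        have h1 : μv lu < D := by
          have := hcmp lu hlu; rw [hbu] at this; linarith
        simp only [hF, hbu]
        have : a * (Sin - lu) * (D - μv lu) > 0 :=
          mul_pos (mul_pos ha (by linarith)) (by linarith)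
        linarith
      have hFm : F m < 0 := by
        rcases le_total lv Sin with hcase | hcase
        · have hmeq : m = lv := min_eq_left hcase
          rw [hmeq]
          have h1 : D < μu lv := by
            have := hcmp lv (by linarith); rw [hbv] at this; linarith
          simp only [hF, hbv]
          nlinarith [hb, h1]
        · have hmeq : m = Sin := min_eq_right hcase
          rw [hmeq]
          have h1 : μv Sin ≤ D := by
            rcases eq_or_lt_of_le hcase with h' | h'
            · rw [h', hbv]
            · have := hμv_mono hIciS ((hlu.trans hlt).le : lv ∈ Ici (0:ℝ)) h'
              linarith
          simp only [hF]
          nlinarith [hb, hDS, h1]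
      -- intermediate value theorem
      have hsub := intermediate_value_Ioo' hlum.le hFcont
      have h0mem : (0:ℝ) ∈ Ioo (F m) (F lu) := ⟨hFm, hFlu⟩
      obtain ⟨s, hsIoo, hFs⟩ := hsub h0mem
      obtain ⟨hs1, hs2⟩ := hsIoo
      have hspos : 0 < s := lt_trans hlu hs1
      have hsltlv : s < lv := lt_of_lt_of_le hs2 (min_le_left _ _)
      have hsltSin : s < Sin := lt_of_lt_of_le hs2 (min_le_right _ _)
      have hq : 0 < μu s - D := by
        have := hμu_mono hIcilu hspos.le hs1
        linarith
      have hp : 0 < D - μv s := by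
        have := hμv_mono hspos.le ((hlu.trans hlt).le : lv ∈ Ici (0:ℝ)) hsltlv
        linarith
      set p : ℝ := D - μv s with hpdef
      set q : ℝ := μu s - D with hqdef
      set w : ℝ := Sin - s with hwdef
      have hw : 0 < w := by simp only [hwdef]; linarith
      have hPpos : 0 < p + q := by linarith
      have hPne : p + q ≠ 0 := ne_of_gt hPpos
      have key : a * w * p = (b + p) * q := by
        rw [hpdef, hqdef, hwdef]
        have : F s = 0 := hFs
        simp only [hF] at this
        linarith
      refine ⟨w * p / (p + q), w * q / (p + q), ?_, ?_, ?_, ?_, ?_⟩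
      · positivity
      · positivity
      · have huv : w * p / (p + q) + w * q / (p + q) = w := by
          field_simp
        simp only [hwdef] at huv ⊢
        linarith
      · have huv : w * p / (p + q) + w * q / (p + q) = w := by
          field_simp
        have hsuv : Sin - w * p / (p + q) - w * q / (p + q) = s := by
          simp only [hwdef] at huv ⊢; linarith
        rw [hsuv, huv]
        have hu_eq : (w * p / (p + q)) * (p + q) = w * p := by field_simp
        have hv_eq : (w * q / (p + q)) * (p + q) = w * q := by field_simp
        have g1 : ((μu s - D) * (w * p / (p + q)) - a * w * (w * p / (p + q))
            + b * (w * q / (p + q))) * (p + q) = 0 := by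
          linear_combination q * hu_eq - a * w * hu_eq + b * hv_eq - w * key
        rcases mul_eq_zero.1 g1 with h | h
        · linarith
        · exact absurd h hPne
      · have huv : w * p / (p + q) + w * q / (p + q) = w := by
          field_simp
        have hsuv : Sin - w * p / (p + q) - w * q / (p + q) = s := by
          simp only [hwdef] at huv ⊢; linarith
        rw [hsuv, huv]
        have hu_eq : (w * p / (p + q)) * (p + q) = w * p := by field_simp
        have hv_eq : (w * q / (p + q)) * (p + q) = w * q := by field_simp
        have g2 : ((μv s - D) * (w * q / (p + q)) + a * w * (w * p / (p + q))
            - b * (w * q / (p + q))) * (p + q) = 0 := by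
          linear_combination (-p) * hv_eq + a * w * hu_eq - b * hv_eq + w * key
        rcases mul_eq_zero.1 g2 with h | h
        · linarith
        · exact absurd h hPne
  · -- uniqueness
    rintro u₁ v₁ u₂ v₂ ⟨hu₁, hv₁, hs₁, e11, e12⟩ ⟨hu₂, hv₂, hs₂, e21, e22⟩
    obtain ⟨hq₁, hp₁, quv₁, key₁⟩ := chemostat_aux hcmp hu₁ hv₁ hs₁ e11 e12
    obtain ⟨hq₂, hp₂, quv₂, key₂⟩ := chemostat_aux hcmp hu₂ hv₂ hs₂ e21 e22
    have k₁ : a * (Sin - (Sin - u₁ - v₁)) * (D - μv (Sin - u₁ - v₁))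
        = (b + (D - μv (Sin - u₁ - v₁))) * (μu (Sin - u₁ - v₁) - D) := by
      linear_combination key₁
    have k₂ : a * (Sin - (Sin - u₂ - v₂)) * (D - μv (Sin - u₂ - v₂))
        = (b + (D - μv (Sin - u₂ - v₂))) * (μu (Sin - u₂ - v₂) - D) := by
      linear_combination key₂
    have hw₁ : 0 < Sin - (Sin - u₁ - v₁) := by linarith
    have hw₂ : 0 < Sin - (Sin - u₂ - v₂) := by linarith
    have hseq : Sin - u₁ - v₁ = Sin - u₂ - v₂ := by
      rcases lt_trichotomy (Sin - u₁ - v₁) (Sin - u₂ - v₂) with h | h | h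
      · exact absurd h (fun h => hcontra _ _ hs₁ hs₂ hw₁ hw₂ hq₁ hp₁ hq₂ hp₂ k₁ k₂ h)
      · exact h
      · exact absurd h (fun h => hcontra _ _ hs₂ hs₁ hw₂ hw₁ hq₂ hp₂ hq₁ hp₁ k₂ k₁ h)
    rw [hseq] at quv₁ hq₁ hp₁
    have huvsum : u₁ + v₁ = u₂ + v₂ := by linarith
    have hv12 : ((D - μv (Sin - u₂ - v₂)) + (μu (Sin - u₂ - v₂) - D)) * v₁
        = ((D - μv (Sin - u₂ - v₂)) + (μu (Sin - u₂ - v₂) - D)) * v₂ := by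
      linear_combination -quv₁ + quv₂ + (μu (Sin - u₂ - v₂) - D) * huvsum
    have hPne : (D - μv (Sin - u₂ - v₂)) + (μu (Sin - u₂ - v₂) - D) ≠ 0 := by
      linarith
    have hveq : v₁ = v₂ := mul_left_cancel₀ hPne hv12
    exact ⟨by linarith, hveq⟩
end

section
/- Define g(x,p) = -α(px, (1-p)x)·p + β((1-p)x)·(1-p). Under Assumptions: α is C¹, increasing in each argument, α(u,0) > 0 for u > 0, ∂α/∂u ≥ ∂α/∂v everywhere; β is C¹, decreasing, v ↦ β(v)v increasing, β(v) > 0 for v > 0. Then for each x > 0 there exists a unique p̄(x) ∈ (0,1) with g(x, p̄(x)) = 0, and the map p ↦ g(x,p) is strictly decreasing on [0,1]. -/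
/-!
The crux is that `t ↦ α t (c - t)` is nondecreasing along every antidiagonal `u + v = c`, because
`∂α/∂u ≥ ∂α/∂v`. The partial derivatives need not be continuous, so there is no chain rule; instead
one averages `α t` over a vertical window `[c - t, c - t + r]`. By Fatou's lemma, the lower right
Dini derivative of this average is at least `∫ (∂α/∂u - ∂α/∂v) ≥ 0`, so the average is monotone,
and letting `r → 0` gives the claim.

Hence `p ↦ α (p x) ((1 - p) x) · p` is nondecreasing on `[0, 1]`, while `p ↦ β ((1 - p) x) (1 - p)`
is strictly decreasing since `v ↦ β v · v` is strictly increasing. So `g(x, ·)` is strictly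
decreasing, with `g(x, 0) = β x > 0` and `g(x, 1) = -α x 0 < 0`, and the intermediate value theorem
gives its unique zero.
-/

open Set Filter Topology MeasureTheory

theorem continuous_uncurry_of_monotone_of_continuous {f : ℝ → ℝ → ℝ}
    (hmu : ∀ v, Monotone (f · v)) (hmv : ∀ u, Monotone (f u))
    (hcu : ∀ v, Continuous (f · v)) (hcv : ∀ u, Continuous (f u)) :
    Continuous (Function.uncurry f) := by
  refine continuous_iff_continuousAt.2 fun ⟨u, v⟩ =>
    tendsto_order.2 ⟨fun b hb => ?_, fun b hb => ?_⟩
  · obtain ⟨u', hu', hbu'⟩ := (((hcu v).tendsto u).eventually (lt_mem_nhds hb)).exists_lt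
    obtain ⟨v', hv', hbv'⟩ := (((hcv u').tendsto v).eventually (lt_mem_nhds hbu')).exists_lt
    filter_upwards [prod_mem_nhds (Ioi_mem_nhds hu') (Ioi_mem_nhds hv')] with p hp
    exact hbv'.trans_le ((hmv u' hp.2.le).trans (hmu p.2 hp.1.le))
  · obtain ⟨u', hu', hbu'⟩ := (((hcu v).tendsto u).eventually (gt_mem_nhds hb)).exists_gt
    obtain ⟨v', hv', hbv'⟩ := (((hcv u').tendsto v).eventually (gt_mem_nhds hbu')).exists_gt
    filter_upwards [prod_mem_nhds (Iio_mem_nhds hu') (Iio_mem_nhds hv')] with p hp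
    exact ((hmu p.2 hp.1.le).trans (hmv u' hp.2.le)).trans_lt hbv'

theorem continuous_uncurry_of_hasDerivAt {f fu fv : ℝ → ℝ → ℝ}
    (hfu : ∀ u v, HasDerivAt (f · v) (fu u v) u) (hfv : ∀ u v, HasDerivAt (f u) (fv u v) v)
    (hfu_nonneg : ∀ u v, 0 ≤ fu u v) (hfv_nonneg : ∀ u v, 0 ≤ fv u v) :
    Continuous (Function.uncurry f) :=
  continuous_uncurry_of_monotone_of_continuous
    (fun v => monotone_of_hasDerivAt_nonneg (hfu · v) fun u => hfu_nonneg u v)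
    (fun u => monotone_of_hasDerivAt_nonneg (hfv u) (hfv_nonneg u))
    (fun v => continuous_iff_continuousAt.2 fun u => (hfu u v).continuousAt)
    (fun u => continuous_iff_continuousAt.2 fun v => (hfv u v).continuousAt)

theorem monotone_of_frequently_neg_lt_slope {f : ℝ → ℝ} (hf : Continuous f)
    (hslope : ∀ x, ∀ ε > 0, ∃ᶠ z in 𝓝[>] x, -ε < slope f x z) : Monotone f := by
  intro a b hab
  have := image_le_of_liminf_slope_right_le_deriv_boundary (f := fun x => -f x) (a := a) (b := b)
    hf.neg.continuousOn (B := fun _ => -f a) (B' := 0) le_rfl continuousOn_const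
    (fun _ _ => hasDerivWithinAt_const _ _ _)
    (fun x _ ε hε => (hslope x ε hε).mono fun z hz => by rw [slope_neg]; exact neg_lt.1 hz)
    ⟨hab, le_rfl⟩
  exact neg_le_neg_iff.1 this

theorem lintegral_ofReal_le_of_tendsto {α ι : Type*} [MeasurableSpace α] {μ : Measure α}
    {l : Filter ι} [l.IsCountablyGenerated] [l.NeBot] {g : ι → α → ℝ} {G : α → ℝ} {M : ℝ}
    (hint : ∀ i, Integrable (g i) μ) (hlim : ∀ x, Tendsto (g · x) l (𝓝 (G x)))
    (hbound : ∀ᶠ i in l, 0 ≤ g i ∧ ∫ x, g i x ∂μ ≤ M) :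
    ∫⁻ x, ENNReal.ofReal (G x) ∂μ ≤ ENNReal.ofReal M :=
  calc ∫⁻ x, ENNReal.ofReal (G x) ∂μ = ∫⁻ x, liminf (fun i => ENNReal.ofReal (g i x)) l ∂μ :=
        lintegral_congr fun x =>
          ((ENNReal.continuous_ofReal.tendsto _).comp (hlim x)).liminf_eq.symm
    _ ≤ liminf (fun i => ∫⁻ x, ENNReal.ofReal (g i x) ∂μ) l :=
        lintegral_liminf_le' fun i => (hint i).aemeasurable.ennreal_ofReal
    _ ≤ ENNReal.ofReal M := by
        refine liminf_le_of_frequently_le' (hbound.mono fun i ⟨hnonneg, hle⟩ => ?_).frequently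
        rw [← ofReal_integral_eq_lintegral_ofReal (hint i) (ae_of_all _ hnonneg)]
        exact ENNReal.ofReal_le_ofReal hle

theorem lintegral_ofReal_deriv_of_nonneg {g g' : ℝ → ℝ} {a b : ℝ} (hab : a ≤ b)
    (hcont : ContinuousOn g (Icc a b)) (hderiv : ∀ x ∈ Ioo a b, HasDerivAt g (g' x) x)
    (hpos : ∀ x ∈ Ioo a b, 0 ≤ g' x) :
    ∫⁻ x in Ioc a b, ENNReal.ofReal (g' x) = ENNReal.ofReal (g b - g a) := by
  have hint := intervalIntegral.integrableOn_deriv_of_nonneg hcont hderiv hpos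
  rw [← intervalIntegral.integral_eq_sub_of_hasDerivAt_of_le hab hcont hderiv
    ((intervalIntegrable_iff_integrableOn_Ioc_of_le hab).2 hint),
    intervalIntegral.integral_of_le hab, integral_Ioc_eq_integral_Ioo,
    setLIntegral_congr Ioo_ae_eq_Ioc.symm,
    ofReal_integral_eq_lintegral_ofReal (hint.mono_set Ioo_subset_Ioc_self)
      ((ae_restrict_mem measurableSet_Ioo).mono hpos)]

theorem tendsto_inv_mul_intervalIntegral {g : ℝ → ℝ} (hg : Continuous g) (x : ℝ) :
    Tendsto (fun r => r⁻¹ * ∫ v in x..x + r, g v) (𝓝[>] 0) (𝓝 (g x)) := by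
  simpa using (hg.integral_hasStrictDerivAt x x).hasDerivAt.tendsto_slope_zero_right

noncomputable def windowIntegral (f : ℝ → ℝ → ℝ) (c r t : ℝ) : ℝ :=
  ∫ v in c - t..c - t + r, f t v

section Window

variable {f : ℝ → ℝ → ℝ}

theorem windowIntegral_sub_ge (hmu : ∀ v, Monotone (f · v)) (hmv : ∀ u, Monotone (f u))
    (hcv : ∀ u, Continuous (f u)) (c r t : ℝ) {h : ℝ} (hh : 0 ≤ h) :
    (∫ v in c - t..c - t + r, (f (t + h) v - f t v)) + h * (f t (c - t - h) - f (t + h) (c - t + r))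
      ≤ windowIntegral f c r (t + h) - windowIntegral f c r t := by
  set w := c - t
  have hi : ∀ u a b, IntervalIntegrable (f u) volume a b := fun u a b =>
    (hcv u).intervalIntegrable a b
  have hsplit : windowIntegral f c r (t + h) = (∫ v in w - h..w, f (t + h) v)
      + (∫ v in w..w + r, f (t + h) v) - ∫ v in w - h + r..w + r, f (t + h) v := by
    rw [windowIntegral, show c - (t + h) = w - h by ring,
      ← intervalIntegral.integral_add_adjacent_intervals (hi _ _ w) (hi _ _ (w - h + r)),
      ← intervalIntegral.integral_add_adjacent_intervals (hi _ w (w - h + r)) (hi _ _ (w + r))]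
    ring
  have hleft : h * f t (w - h) ≤ ∫ v in w - h..w, f (t + h) v := by
    have := intervalIntegral.integral_mono_on (f := fun _ => f t (w - h)) (a := w - h) (b := w)
      (by linarith) intervalIntegrable_const (hi _ _ _) fun v hv =>
        (hmv t hv.1).trans (hmu v (le_add_of_nonneg_right hh))
    rwa [intervalIntegral.integral_const, smul_eq_mul, sub_sub_cancel] at this
  have hright : ∫ v in w - h + r..w + r, f (t + h) v ≤ h * f (t + h) (w + r) := by
    have := intervalIntegral.integral_mono_on (g := fun _ => f (t + h) (w + r)) (a := w - h + r)
      (b := w + r) (by linarith) (hi _ _ _) intervalIntegrable_const fun v hv => hmv (t + h) hv.2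
    rwa [intervalIntegral.integral_const, smul_eq_mul, show w + r - (w - h + r) = h by ring] at this
  rw [hsplit, windowIntegral, intervalIntegral.integral_sub (hi _ _ _) (hi _ _ _)]
  linarith

theorem sub_le_of_eventually_integral_slope_le {fu fv : ℝ → ℝ → ℝ}
    (hfu : ∀ u v, HasDerivAt (f · v) (fu u v) u) (hfv : ∀ u v, HasDerivAt (f u) (fv u v) v)
    (hfv_nonneg : ∀ u v, 0 ≤ fv u v) (hfvu : ∀ u v, fv u v ≤ fu u v) (t : ℝ) {a b M : ℝ}
    (hab : a ≤ b) (hM : ∀ᶠ h in 𝓝[>] 0, ∫ v in Ioc a b, h⁻¹ * (f (t + h) v - f t v) ≤ M) :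
    f t b - f t a ≤ M := by
  have hcv : ∀ u, Continuous (f u) := fun u =>
    continuous_iff_continuousAt.2 fun v => (hfv u v).continuousAt
  have hbound : ∀ᶠ h in 𝓝[>] 0, 0 ≤ (fun v => h⁻¹ * (f (t + h) v - f t v)) ∧
      ∫ v in Ioc a b, h⁻¹ * (f (t + h) v - f t v) ≤ M := by
    filter_upwards [hM, self_mem_nhdsWithin] with h hle (hh : 0 < h)
    refine ⟨fun v => mul_nonneg (inv_nonneg.2 hh.le) (sub_nonneg.2 ?_), hle⟩
    exact monotone_of_hasDerivAt_nonneg (hfu · v) (fun u => (hfv_nonneg u v).trans (hfvu u v))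
      (le_add_of_nonneg_right hh.le)
  have hfatou : ∫⁻ v in Ioc a b, ENNReal.ofReal (fu t v) ≤ ENNReal.ofReal M :=
    lintegral_ofReal_le_of_tendsto
      (fun h => (((hcv (t + h)).sub (hcv t)).const_mul h⁻¹).integrableOn_Ioc)
      (fun v => by simpa using (hfu t v).tendsto_slope_zero_right) hbound
  have hftc : ∫⁻ v in Ioc a b, ENNReal.ofReal (fv t v) = ENNReal.ofReal (f t b - f t a) :=
    lintegral_ofReal_deriv_of_nonneg hab (hcv t).continuousOn (fun v _ => hfv t v)
      (fun v _ => hfv_nonneg t v)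
  obtain ⟨h, hq0, hqle⟩ := hbound.exists
  have hM0 : 0 ≤ M := (setIntegral_nonneg measurableSet_Ioc fun v _ => hq0 v).trans hqle
  rw [← ENNReal.ofReal_le_ofReal_iff hM0, ← hftc]
  exact (lintegral_mono fun v => ENNReal.ofReal_le_ofReal (hfvu t v)).trans hfatou

theorem frequently_neg_lt_slope_windowIntegral {fu fv : ℝ → ℝ → ℝ}
    (hfu : ∀ u v, HasDerivAt (f · v) (fu u v) u) (hfv : ∀ u v, HasDerivAt (f u) (fv u v) v)
    (hfv_nonneg : ∀ u v, 0 ≤ fv u v) (hfvu : ∀ u v, fv u v ≤ fu u v)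
    (c : ℝ) {r : ℝ} (hr : 0 ≤ r) (t : ℝ) {ε : ℝ} (hε : 0 < ε) :
    ∃ᶠ z in 𝓝[>] t, -ε < slope (windowIntegral f c r) t z := by
  have hmu : ∀ v, Monotone (f · v) := fun v =>
    monotone_of_hasDerivAt_nonneg (hfu · v) fun u => (hfv_nonneg u v).trans (hfvu u v)
  have hmv : ∀ u, Monotone (f u) := fun u => monotone_of_hasDerivAt_nonneg (hfv u) (hfv_nonneg u)
  have hcv : ∀ u, Continuous (f u) := fun u =>
    continuous_iff_continuousAt.2 fun v => (hfv u v).continuousAt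
  set w := c - t
  by_contra hcon
  rw [not_frequently] at hcon
  have hshift : Tendsto (t + ·) (𝓝[>] 0) (𝓝[>] t) := by
    have := map_add_left_nhdsGT (c := t) (a := (0 : ℝ))
    rw [add_zero] at this
    exact this.le
  have hlow : Tendsto (fun h => f t (w - h)) (𝓝[>] 0) (𝓝 (f t w)) :=
    (((hcv t).comp (continuous_sub_left w)).tendsto' 0 _ (by simp)).mono_left nhdsWithin_le_nhds
  have hup : Tendsto (fun h => f (t + h) (w + r)) (𝓝[>] 0) (𝓝 (f t (w + r))) := by
    have hcu : Continuous (f · (w + r)) :=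
      continuous_iff_continuousAt.2 fun u => (hfu u _).continuousAt
    exact ((hcu.comp (continuous_const_add t)).tendsto' 0 _ (by simp)).mono_left nhdsWithin_le_nhds
  have hQ : ∀ᶠ h in 𝓝[>] 0, ∫ v in Ioc w (w + r), h⁻¹ * (f (t + h) v - f t v)
      ≤ f t (w + r) - f t w - ε / 2 := by
    filter_upwards [hshift.eventually hcon,
      hlow.eventually (lt_mem_nhds (sub_lt_self _ (by positivity : 0 < ε / 4))),
      hup.eventually (gt_mem_nhds (lt_add_of_pos_right _ (by positivity : 0 < ε / 4))),
      self_mem_nhdsWithin] with h hslope hl hu (hh : 0 < h)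
    have key := windowIntegral_sub_ge hmu hmv hcv c r t hh.le
    rw [not_lt, slope_def_field, add_sub_cancel_left, div_le_iff₀ hh] at hslope
    rw [← intervalIntegral.integral_of_le (by linarith), intervalIntegral.integral_const_mul,
      inv_mul_le_iff₀ hh]
    nlinarith [mul_lt_mul_of_pos_left hl hh, mul_lt_mul_of_pos_left hu hh]
  have := sub_le_of_eventually_integral_slope_le hfu hfv hfv_nonneg hfvu t
    (le_add_of_nonneg_right hr) hQ
  linarith

theorem continuous_windowIntegral (hf : Continuous (Function.uncurry f)) (c r : ℝ) :
    Continuous (windowIntegral f c r) := by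
  have hi : ∀ t a b, IntervalIntegrable (f t) volume a b := fun t a b =>
    (hf.uncurry_left t).intervalIntegrable a b
  have : windowIntegral f c r = fun t => (∫ v in 0..c - t + r, f t v) - ∫ v in 0..c - t, f t v :=
    funext fun t => (intervalIntegral.integral_interval_sub_left (hi _ _ _) (hi _ _ _)).symm
  rw [this]
  exact (intervalIntegral.continuous_parametric_intervalIntegral_of_continuous hf (by fun_prop)).sub
    (intervalIntegral.continuous_parametric_intervalIntegral_of_continuous hf (by fun_prop))

theorem monotone_windowIntegral {fu fv : ℝ → ℝ → ℝ}
    (hfu : ∀ u v, HasDerivAt (f · v) (fu u v) u) (hfv : ∀ u v, HasDerivAt (f u) (fv u v) v)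
    (hfv_nonneg : ∀ u v, 0 ≤ fv u v) (hfvu : ∀ u v, fv u v ≤ fu u v) (c : ℝ) {r : ℝ} (hr : 0 ≤ r) :
    Monotone (windowIntegral f c r) :=
  monotone_of_frequently_neg_lt_slope
    (continuous_windowIntegral (continuous_uncurry_of_hasDerivAt hfu hfv
      (fun u v => (hfv_nonneg u v).trans (hfvu u v)) hfv_nonneg) c r)
    fun t _ hε => frequently_neg_lt_slope_windowIntegral hfu hfv hfv_nonneg hfvu c hr t hε

theorem monotone_apply_sub_of_hasDerivAt {fu fv : ℝ → ℝ → ℝ}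
    (hfu : ∀ u v, HasDerivAt (f · v) (fu u v) u) (hfv : ∀ u v, HasDerivAt (f u) (fv u v) v)
    (hfv_nonneg : ∀ u v, 0 ≤ fv u v) (hfvu : ∀ u v, fv u v ≤ fu u v) (c : ℝ) :
    Monotone fun t => f t (c - t) := by
  intro a b hab
  have hcv : ∀ u, Continuous (f u) := fun u =>
    continuous_iff_continuousAt.2 fun v => (hfv u v).continuousAt
  refine le_of_tendsto_of_tendsto (tendsto_inv_mul_intervalIntegral (hcv a) (c - a))
    (tendsto_inv_mul_intervalIntegral (hcv b) (c - b)) ?_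
  filter_upwards [self_mem_nhdsWithin] with r (hr : 0 < r)
  exact mul_le_mul_of_nonneg_left (monotone_windowIntegral hfu hfv hfv_nonneg hfvu c hr.le hab)
    (inv_nonneg.2 hr.le)

end Window

theorem existsUnique_mem_Ioo_eq_zero {g : ℝ → ℝ} {a b : ℝ} (hab : a ≤ b)
    (hg : ContinuousOn g (Icc a b)) (hanti : StrictAntiOn g (Icc a b)) (ha : 0 < g a)
    (hb : g b < 0) : ∃! p, p ∈ Ioo a b ∧ g p = 0 := by
  obtain ⟨p, hp, hgp⟩ := intermediate_value_Ioo' hab hg ⟨hb, ha⟩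
  exact ⟨p, ⟨hp, hgp⟩, fun q ⟨hq, hgq⟩ =>
    hanti.injOn (Ioo_subset_Icc_self hq) (Ioo_subset_Icc_self hp) (hgq.trans hgp.symm)⟩

theorem chemostat_fast_proportion_exists_unique_general
    (α : ℝ → ℝ → ℝ) (β : ℝ → ℝ) (αu αv : ℝ → ℝ → ℝ) (β' : ℝ → ℝ)
    (hαu_deriv : ∀ u v : ℝ, HasDerivAt (fun t => α t v) (αu u v) u)
    (hαv_deriv : ∀ u v : ℝ, HasDerivAt (fun t => α u t) (αv u v) v)
    (hβ_deriv : ∀ v : ℝ, HasDerivAt β (β' v) v)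
    (hα_nonneg : ∀ u v, 0 ≤ α u v)
    (hαu_nonneg : ∀ u v, 0 ≤ αu u v) (hαv_nonneg : ∀ u v, 0 ≤ αv u v)
    (hαuv : ∀ u v, αv u v ≤ αu u v)
    (hα0 : ∀ u > (0 : ℝ), 0 < α u 0)
    (hβv_mono : StrictMonoOn (fun v => β v * v) (Ici 0))
    (hβ_pos : ∀ v > (0 : ℝ), 0 < β v) :
    ∀ x > (0 : ℝ),
      (∃! p : ℝ, p ∈ Ioo (0 : ℝ) 1 ∧
        -α (p * x) ((1 - p) * x) * p + β ((1 - p) * x) * (1 - p) = 0) ∧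
      StrictAntiOn (fun p => -α (p * x) ((1 - p) * x) * p + β ((1 - p) * x) * (1 - p))
        (Icc (0 : ℝ) 1) := by
  intro x hx
  set g := fun p => -α (p * x) ((1 - p) * x) * p + β ((1 - p) * x) * (1 - p)
  have hθ : Monotone fun p => α (p * x) ((1 - p) * x) := by
    have := (monotone_apply_sub_of_hasDerivAt hαu_deriv hαv_deriv hαv_nonneg hαuv x).comp
      (monotone_mul_right_of_nonneg hx.le)
    convert this using 2 with p
    simp only [Function.comp_apply]
    ring_nf
  have hψ : StrictAntiOn (fun p => β ((1 - p) * x) * (1 - p)) (Icc 0 1) := by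
    intro p hp q hq hpq
    have key := hβv_mono (mem_Ici.2 (by nlinarith [hq.2])) (mem_Ici.2 (by nlinarith [hp.2]))
      (by nlinarith : (1 - q) * x < (1 - p) * x)
    simp only [← mul_assoc] at key
    exact lt_of_mul_lt_mul_right key hx.le
  have hanti : StrictAntiOn g (Icc 0 1) := fun p hp q hq hpq => by
    have := mul_le_mul (hθ hpq.le) hpq.le hp.1 (hα_nonneg _ _)
    have := hψ hp hq hpq
    simp only [g]
    linarith
  have hcont : Continuous g := by
    have hα := continuous_uncurry_of_hasDerivAt hαu_deriv hαv_deriv hαu_nonneg hαv_nonneg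
    have hβ : Continuous β := continuous_iff_continuousAt.2 fun v => (hβ_deriv v).continuousAt
    have hθc : Continuous fun p => α (p * x) ((1 - p) * x) :=
      hα.comp (by fun_prop : Continuous fun p => (p * x, (1 - p) * x))
    fun_prop
  refine ⟨existsUnique_mem_Ioo_eq_zero zero_le_one hcont.continuousOn hanti ?_ ?_, hanti⟩
  · simpa [g] using hβ_pos x hx
  · simpa [g] using hα0 x hx

/-- For each `x > 0` there is a unique `p̄(x) ∈ (0,1)` with `g(x, p̄(x)) = 0`,
where `g(x,p) = -α(px,(1-p)x)p + β((1-p)x)(1-p)`, and `p ↦ g(x,p)` is strictly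
decreasing on `[0,1]`. -/
theorem chemostat_fast_proportion_exists_unique
    (α : ℝ → ℝ → ℝ) (β : ℝ → ℝ) (αu αv : ℝ → ℝ → ℝ) (β' : ℝ → ℝ)
    (hαu_deriv : ∀ u v : ℝ, HasDerivAt (fun t => α t v) (αu u v) u)
    (hαv_deriv : ∀ u v : ℝ, HasDerivAt (fun t => α u t) (αv u v) v)
    (hβ_deriv : ∀ v : ℝ, HasDerivAt β (β' v) v)
    (hα_nonneg : ∀ u v, 0 ≤ α u v) (hβ_nonneg : ∀ v, 0 ≤ β v)
    (hαu_nonneg : ∀ u v, 0 ≤ αu u v) (hαv_nonneg : ∀ u v, 0 ≤ αv u v)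
    (hαuv : ∀ u v, αv u v ≤ αu u v)
    (hα0 : ∀ u > (0 : ℝ), 0 < α u 0)
    (hβ'_nonpos : ∀ v, β' v ≤ 0)
    (hβv_mono : StrictMonoOn (fun v => β v * v) (Ici 0))
    (hβ_pos : ∀ v > (0 : ℝ), 0 < β v) :
    ∀ x > (0 : ℝ),
      (∃! p : ℝ, p ∈ Ioo (0 : ℝ) 1 ∧
        -α (p * x) ((1 - p) * x) * p + β ((1 - p) * x) * (1 - p) = 0) ∧
      StrictAntiOn (fun p => -α (p * x) ((1 - p) * x) * p + β ((1 - p) * x) * (1 - p))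
        (Icc (0 : ℝ) 1) :=
  chemostat_fast_proportion_exists_unique_general α β αu αv β' hαu_deriv hαv_deriv hβ_deriv
    hα_nonneg hαu_nonneg hαv_nonneg hαuv hα0 hβv_mono hβ_pos
end
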